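/- Fix a real number a with 0 < a < 1 and define, for p, q ∈ (0,1), f(p,q) = log(2p(1−q)) − log( √((1−p)² + 4p²·q(1−q)·(1/a − 1)) − (1−p) ). Then for every p ∈ (0,1) and q ∈ (0,1): the derivative of the map p ↦ f(p,q) at p is strictly negative, and the derivative of the map q ↦ f(p,q) at q is strictly negative. -/

import Mathlib

theorem stmt_8 (a : ℝ) (ha0 : 0 < a) (ha1 : a < 1) :
    ∀ p q : ℝ, 0 < p → p < 1 → 0 < q → q < 1 →
      deriv (fun x : ℝ => Real.log (2 * x * (1 - q)) -
        Real.log (Real.sqrt ((1 - x) ^ 2 + 4 * x ^ 2 * q * (1 - q) * (1 / a - 1)) - (1 - x))) p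
        < 0 ∧
      deriv (fun y : ℝ => Real.log (2 * p * (1 - y)) -
        Real.log (Real.sqrt ((1 - p) ^ 2 + 4 * p ^ 2 * y * (1 - y) * (1 / a - 1)) - (1 - p))) q
        < 0 := by
  intro p q hp hp1 hq hq1
  have hc : 0 < 1 / a - 1 := by
    have : 1 < 1 / a := by rw [lt_div_iff₀ ha0]; linarith
    linarith
  set c : ℝ := 1 / a - 1 with hc_def
  have hq1' : (0:ℝ) < 1 - q := by linarith
  have hp1' : (0:ℝ) < 1 - p := by linarith
  have h4 : 0 < 4 * p ^ 2 * q * (1 - q) * c := by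
    have h0 : (0:ℝ) < 4 * p ^ 2 := by positivity
    exact mul_pos (mul_pos (mul_pos h0 hq) hq1') hc
  have hup : 0 < (1 - p) ^ 2 + 4 * p ^ 2 * q * (1 - q) * c := by
    nlinarith [sq_nonneg (1 - p)]
  set s : ℝ := Real.sqrt ((1 - p) ^ 2 + 4 * p ^ 2 * q * (1 - q) * c) with hs_def
  have hs0 : 0 < s := Real.sqrt_pos.mpr hup
  have hs2 : s ^ 2 = (1 - p) ^ 2 + 4 * p ^ 2 * q * (1 - q) * c := Real.sq_sqrt hup.le
  have hsgt : 1 - p < s := by nlinarith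
  have ht : 0 < s - (1 - p) := by linarith
  have h1p : HasDerivAt (fun x : ℝ => 1 - x) (-1) p := by
    simpa using (hasDerivAt_id p).const_sub 1
  constructor
  · -- derivative in p
    have hu : HasDerivAt (fun x : ℝ => (1 - x) ^ 2 + 4 * x ^ 2 * q * (1 - q) * c)
        (-2 * (1 - p) + 8 * p * q * (1 - q) * c) p := by
      have h2 : HasDerivAt (fun x : ℝ => (1 - x) ^ 2) ((2 : ℕ) * (1 - p) ^ (2 - 1) * (-1)) p :=
        h1p.pow 2
      have h3 : HasDerivAt (fun x : ℝ => 4 * x ^ 2 * q * (1 - q) * c)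
          (4 * ((2 : ℕ) * p ^ (2 - 1)) * q * (1 - q) * c) p :=
        ((((hasDerivAt_pow 2 p).const_mul 4).mul_const q).mul_const (1 - q)).mul_const c
      have := h2.add h3
      refine this.congr_deriv ?_
      push_cast
      ring
    have hsq : HasDerivAt
        (fun x : ℝ => Real.sqrt ((1 - x) ^ 2 + 4 * x ^ 2 * q * (1 - q) * c))
        ((-2 * (1 - p) + 8 * p * q * (1 - q) * c) / (2 * s)) p := hu.sqrt hup.ne'
    have hinner : HasDerivAt
        (fun x : ℝ => Real.sqrt ((1 - x) ^ 2 + 4 * x ^ 2 * q * (1 - q) * c) - (1 - x))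
        ((-2 * (1 - p) + 8 * p * q * (1 - q) * c) / (2 * s) - (-1)) p := hsq.sub h1p
    have hlog2 : HasDerivAt
        (fun x : ℝ => Real.log (Real.sqrt ((1 - x) ^ 2 + 4 * x ^ 2 * q * (1 - q) * c) - (1 - x)))
        (((-2 * (1 - p) + 8 * p * q * (1 - q) * c) / (2 * s) - (-1)) / (s - (1 - p))) p :=
      hinner.log ht.ne'
    have hm : HasDerivAt (fun x : ℝ => 2 * x * (1 - q)) (2 * (1 - q)) p := by
      have := ((hasDerivAt_id p).const_mul 2).mul_const (1 - q)
      refine this.congr_deriv ?_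
      ring
    have hlog1 : HasDerivAt (fun x : ℝ => Real.log (2 * x * (1 - q)))
        (2 * (1 - q) / (2 * p * (1 - q))) p :=
      hm.log (by positivity)
    have hF := hlog1.sub hlog2
    have hd : deriv (fun x : ℝ => Real.log (2 * x * (1 - q)) -
        Real.log (Real.sqrt ((1 - x) ^ 2 + 4 * x ^ 2 * q * (1 - q) * c) - (1 - x))) p
        = 2 * (1 - q) / (2 * p * (1 - q)) -
          ((-2 * (1 - p) + 8 * p * q * (1 - q) * c) / (2 * s) - (-1)) / (s - (1 - p)) :=
      hF.deriv
    rw [hd]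
    have key : 2 * (1 - q) / (2 * p * (1 - q)) -
          ((-2 * (1 - p) + 8 * p * q * (1 - q) * c) / (2 * s) - (-1)) / (s - (1 - p))
        = (2 * s * (s - (1 - p)) - p * ((-2 * (1 - p) + 8 * p * q * (1 - q) * c) + 2 * s)) /
            (2 * s * (s - (1 - p)) * p) := by
      field_simp
      ring
    rw [key]
    apply div_neg_of_neg_of_pos
    · nlinarith
    · exact mul_pos (mul_pos (by linarith) ht) hp
  · -- derivative in q
    have h1q : HasDerivAt (fun y : ℝ => 1 - y) (-1) q := by
      simpa using (hasDerivAt_id q).const_sub 1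
    have hv : HasDerivAt (fun y : ℝ => (1 - p) ^ 2 + 4 * p ^ 2 * y * (1 - y) * c)
        (4 * p ^ 2 * (1 - 2 * q) * c) q := by
      have h3 : HasDerivAt (fun y : ℝ => 4 * p ^ 2 * y) (4 * p ^ 2 * 1) q :=
        (hasDerivAt_id q).const_mul (4 * p ^ 2)
      have h5 : HasDerivAt (fun y : ℝ => 4 * p ^ 2 * y * (1 - y) * c)
          ((4 * p ^ 2 * 1 * (1 - q) + 4 * p ^ 2 * q * (-1)) * c) q :=
        (h3.mul h1q).mul_const c
      have := (hasDerivAt_const q ((1 - p) ^ 2)).add h5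
      refine this.congr_deriv ?_
      ring
    have hsq : HasDerivAt
        (fun y : ℝ => Real.sqrt ((1 - p) ^ 2 + 4 * p ^ 2 * y * (1 - y) * c))
        (4 * p ^ 2 * (1 - 2 * q) * c / (2 * s)) q := hv.sqrt hup.ne'
    have hinner : HasDerivAt
        (fun y : ℝ => Real.sqrt ((1 - p) ^ 2 + 4 * p ^ 2 * y * (1 - y) * c) - (1 - p))
        (4 * p ^ 2 * (1 - 2 * q) * c / (2 * s)) q :=
      hsq.sub_const (1 - p)
    have hlog2 : HasDerivAt
        (fun y : ℝ => Real.log (Real.sqrt ((1 - p) ^ 2 + 4 * p ^ 2 * y * (1 - y) * c) - (1 - p)))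
        ((4 * p ^ 2 * (1 - 2 * q) * c / (2 * s)) / (s - (1 - p))) q :=
      hinner.log ht.ne'
    have hm : HasDerivAt (fun y : ℝ => 2 * p * (1 - y)) (2 * p * (-1)) q :=
      h1q.const_mul (2 * p)
    have hlog1 : HasDerivAt (fun y : ℝ => Real.log (2 * p * (1 - y)))
        (2 * p * (-1) / (2 * p * (1 - q))) q :=
      hm.log (by positivity)
    have hF := hlog1.sub hlog2
    have hd : deriv (fun y : ℝ => Real.log (2 * p * (1 - y)) -
        Real.log (Real.sqrt ((1 - p) ^ 2 + 4 * p ^ 2 * y * (1 - y) * c) - (1 - p))) q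
        = 2 * p * (-1) / (2 * p * (1 - q)) -
          (4 * p ^ 2 * (1 - 2 * q) * c / (2 * s)) / (s - (1 - p)) :=
      hF.deriv
    rw [hd]
    have key : 2 * p * (-1) / (2 * p * (1 - q)) -
          (4 * p ^ 2 * (1 - 2 * q) * c / (2 * s)) / (s - (1 - p))
        = (-(2 * s * (s - (1 - p))) - 4 * p ^ 2 * (1 - 2 * q) * c * (1 - q)) /
            (2 * s * (s - (1 - p)) * (1 - q)) := by
      field_simp
    rw [key]
    apply div_neg_of_neg_of_pos
    · -- need: 2*s*(s-(1-p)) + 4*p^2*(1-2q)*c*(1-q) > 0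
      -- i.e. X := 4*p^2*c*(1-q) + 2*(1-p)^2 > 2*(1-p)*s =: Y
      have hB : 0 < 4 * p ^ 2 * c := by positivity
      have hX : 0 < 4 * p ^ 2 * c * (1 - q) + 2 * (1 - p) ^ 2 := by positivity
      have hXY : 0 < 4 * p ^ 2 * c * (1 - q) + 2 * (1 - p) ^ 2 + 2 * (1 - p) * s := by
        have : 0 < 2 * (1 - p) * s := by positivity
        linarith
      have hsq' : (4 * p ^ 2 * c * (1 - q) + 2 * (1 - p) ^ 2) ^ 2 - (2 * (1 - p) * s) ^ 2
          = (4 * p ^ 2 * c) * (1 - q) ^ 2 * ((4 * p ^ 2 * c) + 4 * (1 - p) ^ 2) := by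
        rw [mul_pow, mul_pow, hs2]
        ring
      have hpos : 0 < (4 * p ^ 2 * c) * (1 - q) ^ 2 * ((4 * p ^ 2 * c) + 4 * (1 - p) ^ 2) := by
        positivity
      nlinarith
    · exact mul_pos (mul_pos (by linarith) ht) hq1'
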